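/- arXiv:1802.01054 — 8 statements merged into one kernel-verified Lean document; each statement's English description precedes it below -/
import Mathlib

section
/- Along the interval consensus dynamics, the function H(x(t)) = max{max_i x_i(t), q_*} is nonincreasing in t, where q_* = min_i q_i, assuming the intervals have nonempty intersection (max_i p_i ≤ min_i q_i). -/
open Finset Filter

/-- Saturation of `z` onto the interval `[p, q]`. -/
noncomputable def sat (p q z : ℝ) : ℝ := max p (min z q)

/-- With nonempty interval intersection, the function
`H(x(t)) = max{max_i x_i(t), q_*}` is nonincreasing along the interval
consensus dynamics, where `q_* = min_i q_i`. -/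
theorem H_nonincreasing
    (n : ℕ) (a : Fin (n + 1) → Fin (n + 1) → ℝ) (ha : ∀ i j, 0 ≤ a i j)
    (p q : Fin (n + 1) → ℝ) (hpq : ∀ m, p m ≤ q m)
    (hinter : Finset.univ.sup' Finset.univ_nonempty p ≤
      Finset.univ.inf' Finset.univ_nonempty q)
    (x : ℝ → Fin (n + 1) → ℝ)
    (hx : ∀ i t, HasDerivAt (fun s => x s i)
      (∑ j, a i j * (sat (p j) (q j) (x t j) - x t i)) t) :
    ∀ s t : ℝ, 0 ≤ s → s ≤ t →
      max (Finset.univ.sup' Finset.univ_nonempty (x t))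
          (Finset.univ.inf' Finset.univ_nonempty q) ≤
      max (Finset.univ.sup' Finset.univ_nonempty (x s))
          (Finset.univ.inf' Finset.univ_nonempty q) := by
  intro s t _hs hst
  set Q : ℝ := Finset.univ.inf' Finset.univ_nonempty q with hQ
  set f : ℝ → ℝ := fun u => Finset.univ.sup' Finset.univ_nonempty (x u) with hf
  set C : ℝ := max (f s) Q with hC
  -- the derivative vector
  set D : ℝ → Fin (n + 1) → ℝ :=
    fun u i => ∑ j, a i j * (sat (p j) (q j) (x u j) - x u i) with hD
  -- continuity of each coordinate and of f
  have hcont : ∀ i, Continuous fun u => x u i := fun i =>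
    continuous_iff_continuousAt.2 fun u => (hx i u).continuousAt
  have hfc : Continuous f := by
    exact Continuous.finset_sup'_apply Finset.univ_nonempty fun i _ => hcont i
  -- key fact: when x u i = f u ≥ Q, D u i ≤ 0
  have hkey : ∀ u i, x u i = f u → Q ≤ f u → D u i ≤ 0 := by
    intro u i hxi hQf
    apply Finset.sum_nonpos
    intro j _
    apply mul_nonpos_of_nonneg_of_nonpos (ha i j)
    rw [sub_nonpos, hxi]
    have h1 : p j ≤ Q := le_trans (Finset.le_sup' p (Finset.mem_univ j)) hinter
    have h2 : min (x u j) (q j) ≤ f u :=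
      le_trans (min_le_left _ _) (Finset.le_sup' (x u) (Finset.mem_univ j))
    exact max_le (h1.trans hQf) h2
  -- the main estimate, for every r > 0
  have main : ∀ r : ℝ, 0 < r → f t ≤ C + r * (t - s) := by
    intro r hr
    -- argmax set is nonempty
    have hA : ∀ u : ℝ, (Finset.univ.filter fun i => x u i = f u).Nonempty := by
      intro u
      obtain ⟨i, _, hi⟩ := Finset.exists_mem_eq_sup' Finset.univ_nonempty (x u)
      exact ⟨i, Finset.mem_filter.2 ⟨Finset.mem_univ i, hi.symm⟩⟩
    set f' : ℝ → ℝ := fun u => (Finset.univ.filter fun i => x u i = f u).sup' (hA u) (D u)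
      with hf'
    have := image_le_of_liminf_slope_right_lt_deriv_boundary
      (f := f) (f' := f') (a := s) (b := t) (hfc.continuousOn)
      (B := fun u => C + r * (u - s)) (B' := fun _ => r) ?_ ?_ ?_ ?_
    · exact this (Set.right_mem_Icc.2 hst)
    · -- liminf slope estimate
      intro u _ ρ hρ
      have hev : ∀ᶠ z in nhdsWithin u (Set.Ioi u), f z < f u + ρ * (z - u) := by
        have hall : ∀ i : Fin (n + 1),
            ∀ᶠ z in nhdsWithin u (Set.Ioi u), x z i < f u + ρ * (z - u) := by
          intro i
          rcases eq_or_lt_of_le (Finset.le_sup' (x u) (Finset.mem_univ i)) with heq | hlt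
          · -- argmax coordinate: use the derivative
            have hmem : i ∈ Finset.univ.filter fun j => x u j = f u :=
              Finset.mem_filter.2 ⟨Finset.mem_univ i, heq⟩
            have hDi : D u i < ρ := lt_of_le_of_lt (Finset.le_sup' (D u) hmem) hρ
            have hslope : Filter.Tendsto (slope (fun z => x z i) u)
                (nhdsWithin u {u}ᶜ) (nhds (D u i)) :=
              hasDerivAt_iff_tendsto_slope.1 (hx i u)
            have h1 : ∀ᶠ z in nhdsWithin u {u}ᶜ, slope (fun z => x z i) u z < ρ :=
              hslope.eventually_lt_const hDi
            have h2 : ∀ᶠ z in nhdsWithin u (Set.Ioi u), slope (fun z => x z i) u z < ρ :=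
              h1.filter_mono (nhdsWithin_mono u fun z hz => ne_of_gt hz)
            filter_upwards [h2, self_mem_nhdsWithin] with z hz (hzu : u < z)
            rw [slope_def_field, div_lt_iff₀ (sub_pos.2 hzu)] at hz
            have : x z i < x u i + ρ * (z - u) := by linarith
            rwa [heq] at this
          · -- strictly below the max: use continuity
            have h1 : Filter.Tendsto (fun z => x z i) (nhdsWithin u (Set.Ioi u))
                (nhds (x u i)) := ((hcont i).tendsto u).mono_left nhdsWithin_le_nhds
            have h2 : Filter.Tendsto (fun z => f u + ρ * (z - u))
                (nhdsWithin u (Set.Ioi u)) (nhds (f u + ρ * (u - u))) := by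
              apply Filter.Tendsto.mono_left _ nhdsWithin_le_nhds
              exact (tendsto_const_nhds.add
                ((tendsto_id.sub_const u).const_mul ρ))
            rw [sub_self, mul_zero, add_zero] at h2
            exact h1.eventually_lt h2 hlt
        have : ∀ᶠ z in nhdsWithin u (Set.Ioi u),
            ∀ i : Fin (n + 1), x z i < f u + ρ * (z - u) := eventually_all.2 hall
        filter_upwards [this] with z hz
        exact (Finset.sup'_lt_iff Finset.univ_nonempty).2 fun i _ => hz i
      have : ∀ᶠ z in nhdsWithin u (Set.Ioi u), slope f u z < ρ := by
        filter_upwards [hev, self_mem_nhdsWithin] with z hz (hzu : u < z)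
        rw [slope_def_field, div_lt_iff₀ (sub_pos.2 hzu)]
        linarith
      exact this.frequently
    · -- f s ≤ B s
      simp [hC]
    · -- B has derivative r
      intro u
      simpa using (((hasDerivAt_id u).sub_const s).const_mul r).const_add C
    · -- boundary condition
      intro u hu hfu
      refine lt_of_le_of_lt ?_ hr
      apply Finset.sup'_le
      intro i hi
      have hxi : x u i = f u := (Finset.mem_filter.1 hi).2
      apply hkey u i hxi
      have hfu' : f u = C + r * (u - s) := hfu
      rw [hfu']
      have h1 : Q ≤ C := le_max_right _ _
      have h2 : 0 ≤ r * (u - s) := mul_nonneg hr.le (sub_nonneg.2 hu.1)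
      linarith
  -- let r → 0
  have hft : f t ≤ C := by
    apply le_of_forall_pos_le_add
    intro ε hε
    have hr : 0 < ε / (t - s + 1) := div_pos hε (by linarith)
    have := main _ hr
    have hts : (0:ℝ) ≤ t - s := sub_nonneg.2 hst
    have : ε / (t - s + 1) * (t - s) ≤ ε := by
      rw [div_mul_eq_mul_div, div_le_iff₀ (by linarith)]
      nlinarith
    linarith [main _ hr]
  exact max_le (hft.trans_eq rfl) (le_max_right _ _) |>.trans_eq rfl
end

section
/- Along the interval consensus dynamics with nonempty interval intersection, the function h(x(t)) = min{min_i x_i(t), p_*} is nondecreasing in t, where p_* = max_i p_i. -/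
/-!
Let `m(t) = min (min_i x_i t) c`. Wherever `m` is attained by a coordinate `x_k` (necessarily
`x_k ≤ c` and minimal), that coordinate has nonnegative derivative, and wherever it is attained
by the constant `c` its slope is zero; so the upper right Dini derivative of `-m` is `≤ 0`
everywhere, and `m` is nondecreasing by the Dini-derivative form of the mean value inequality.
For the consensus dynamics with `c = p_*`, the drift of a minimal coordinate `x_i ≤ p_*` is
nonnegative because `sat p_j q_j z ≥ min z p_* ≥ x_i` as soon as `p_* ≤ q_j`.
-/

open Finset Filter Set Topology

lemma min_le_sat {p q P : ℝ} (hP : P ≤ q) (z : ℝ) : min z P ≤ sat p q z :=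
  (min_le_min_left z hP).trans (le_max_right _ _)

theorem monotone_of_frequently_lt_slope {h : ℝ → ℝ} (hc : Continuous h)
    (hslope : ∀ z, ∀ r < 0, ∃ᶠ w in 𝓝[>] z, r < slope h z w) : Monotone h := by
  intro s t hst
  have := image_le_of_liminf_slope_right_le_deriv_boundary (f := fun z => -h z)
    (B := fun _ => -h s) (B' := fun _ => 0) hc.neg.continuousOn le_rfl continuousOn_const
    (fun _ _ => hasDerivWithinAt_const _ _ _)
    (fun z _ r hr => (hslope z (-r) (neg_lt_zero.2 hr)).mono fun w hw => by
      rw [slope_neg]; linarith)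
    (right_mem_Icc.2 hst)
  linarith

theorem frequently_lt_slope_inf' {ι : Type*} [Fintype ι] [Nonempty ι] {u : ι → ℝ → ℝ}
    {z r : ℝ} (hu : ∀ i, ContinuousWithinAt (u i) (Ioi z) z)
    (hslope : ∀ i, u i z = univ.inf' univ_nonempty (fun j => u j z) →
      ∀ᶠ w in 𝓝[>] z, r < slope (u i) z w) :
    ∃ᶠ w in 𝓝[>] z, r < slope (fun t => univ.inf' univ_nonempty (fun j => u j t)) z w := by
  set g := fun t => univ.inf' univ_nonempty (fun j => u j t)
  -- some index attains the minimum frequently to the right of `z`; by continuity it does at `z`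
  obtain ⟨k, hk⟩ : ∃ k, ∃ᶠ w in 𝓝[>] z, g w = u k w :=
    frequently_exists.1 <| Eventually.frequently <| Eventually.of_forall fun w =>
      let ⟨i, _, hi⟩ := exists_mem_eq_inf' univ_nonempty fun j => u j w; ⟨i, hi⟩
  have hg : ContinuousWithinAt g (Ioi z) z :=
    ContinuousWithinAt.finset_inf'_apply univ_nonempty fun i _ => hu i
  have hkz : g z = u k z := tendsto_nhds_unique_of_frequently_eq hg (hu k) hk
  refine (hk.and_eventually (hslope k hkz.symm)).mono fun w ⟨hw, hr⟩ => ?_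
  rwa [slope_def_field, hw, hkz, ← slope_def_field]

theorem min_inf'_eq_inf'_option {ι α : Type*} [Fintype ι] [Nonempty ι] [LinearOrder α]
    (f : ι → α) (c : α) :
    min (univ.inf' univ_nonempty f) c =
      univ.inf' univ_nonempty fun o : Option ι => o.elim c f := by
  refine le_antisymm (le_inf' univ_nonempty _ fun o _ => ?_)
    (le_min (le_inf' univ_nonempty _ fun i _ => inf'_le _ (mem_univ (some i)))
      (inf'_le _ (mem_univ none)))
  cases o with
  | none => exact min_le_right _ _
  | some i => exact (min_le_left _ _).trans (inf'_le _ (mem_univ i))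

theorem monotone_min_inf'_of_hasDerivAt {ι : Type*} [Fintype ι] [Nonempty ι]
    {x x' : ℝ → ι → ℝ} {c : ℝ} (hx : ∀ i t, HasDerivAt (fun s => x s i) (x' t i) t)
    (hx' : ∀ t i, x t i ≤ c → (∀ j, x t i ≤ x t j) → 0 ≤ x' t i) :
    Monotone fun t => min (univ.inf' univ_nonempty (x t)) c := by
  have hcont : ∀ o : Option ι, Continuous fun t => o.elim c (x t)
    | none => continuous_const
    | some i => continuous_iff_continuousAt.2 fun t => (hx i t).continuousAt
  simp only [min_inf'_eq_inf'_option]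
  refine monotone_of_frequently_lt_slope
    (Continuous.finset_inf'_apply univ_nonempty fun o _ => hcont o) fun z r hr => ?_
  refine frequently_lt_slope_inf' (fun o => (hcont o).continuousWithinAt) fun o hactive => ?_
  cases o with
  | none => exact Eventually.of_forall fun w => by simpa [slope_def_field] using hr
  | some i =>
    have hslope := (hasDerivWithinAt_iff_tendsto_slope' (lt_irrefl z)).1
      ((hx i z).hasDerivWithinAt (s := Ioi z))
    refine hslope.eventually_const_lt (hr.trans_le (hx' z i ?_ fun j => ?_))
    · exact hactive.trans_le (inf'_le _ (mem_univ none))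
    · exact hactive.trans_le (inf'_le _ (mem_univ (some j)))

theorem h_nondecreasing_general
    (n : ℕ) (a : Fin (n + 1) → Fin (n + 1) → ℝ) (ha : ∀ i j, 0 ≤ a i j)
    (p q : Fin (n + 1) → ℝ)
    (hinter : Finset.univ.sup' Finset.univ_nonempty p ≤
      Finset.univ.inf' Finset.univ_nonempty q)
    (x : ℝ → Fin (n + 1) → ℝ)
    (hx : ∀ i t, HasDerivAt (fun s => x s i)
      (∑ j, a i j * (sat (p j) (q j) (x t j) - x t i)) t) :
    ∀ s t : ℝ, 0 ≤ s → s ≤ t →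
      min (Finset.univ.inf' Finset.univ_nonempty (x s))
          (Finset.univ.sup' Finset.univ_nonempty p) ≤
      min (Finset.univ.inf' Finset.univ_nonempty (x t))
          (Finset.univ.sup' Finset.univ_nonempty p) := by
  intro s t _ hst
  have hPq : ∀ j, univ.sup' univ_nonempty p ≤ q j := fun j =>
    hinter.trans (inf'_le _ (mem_univ j))
  refine monotone_min_inf'_of_hasDerivAt hx (fun z i hiP hmin => ?_) hst
  exact sum_nonneg fun j _ => mul_nonneg (ha i j)
    (sub_nonneg.2 ((le_min (hmin j) hiP).trans (min_le_sat (hPq j) _)))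

/-- With nonempty interval intersection, the function
`h(x(t)) = min{min_i x_i(t), p_*}` is nondecreasing along the interval
consensus dynamics, where `p_* = max_i p_i`. -/
theorem h_nondecreasing
    (n : ℕ) (a : Fin (n + 1) → Fin (n + 1) → ℝ) (ha : ∀ i j, 0 ≤ a i j)
    (p q : Fin (n + 1) → ℝ) (hpq : ∀ m, p m ≤ q m)
    (hinter : Finset.univ.sup' Finset.univ_nonempty p ≤
      Finset.univ.inf' Finset.univ_nonempty q)
    (x : ℝ → Fin (n + 1) → ℝ)
    (hx : ∀ i t, HasDerivAt (fun s => x s i)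
      (∑ j, a i j * (sat (p j) (q j) (x t j) - x t i)) t) :
    ∀ s t : ℝ, 0 ≤ s → s ≤ t →
      min (Finset.univ.inf' Finset.univ_nonempty (x s))
          (Finset.univ.sup' Finset.univ_nonempty p) ≤
      min (Finset.univ.inf' Finset.univ_nonempty (x t))
          (Finset.univ.sup' Finset.univ_nonempty p) :=
  h_nondecreasing_general n a ha p q hinter x hx
end

section
/- The interval consensus dynamics has at least one equilibrium point, and this equilibrium lies in [p̲, q̄]^n with p̲ = min_i p_i, q̄ = max_i q_i. -/
open Finset Filter

/-- The interval consensus dynamics has at least one equilibrium, lying inside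
the hypercube `[p̲, q̄]^n` with `p̲ = min_i p_i`, `q̄ = max_i q_i`. -/
theorem equilibrium_exists
    (n : ℕ) (a : Fin (n + 1) → Fin (n + 1) → ℝ) (ha : ∀ i j, 0 ≤ a i j)
    (hN : ∀ i, ∃ j, 0 < a i j)
    (p q : Fin (n + 1) → ℝ) (hpq : ∀ m, p m ≤ q m)
    (plow qbar : ℝ)
    (hplow : plow = Finset.univ.inf' Finset.univ_nonempty p)
    (hqbar : qbar = Finset.univ.sup' Finset.univ_nonempty q) :
    ∃ e : Fin (n + 1) → ℝ,
      (∀ i, e i ∈ Set.Icc plow qbar) ∧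
      (∀ i, ∑ j, a i j * (sat (p j) (q j) (e j) - e i) = 0) := by
  have hplow_le : ∀ j, plow ≤ p j := by
    intro j; rw [hplow]; exact Finset.inf'_le _ (Finset.mem_univ j)
  have hq_le : ∀ j, q j ≤ qbar := by
    intro j; rw [hqbar]; exact Finset.le_sup' _ (Finset.mem_univ j)
  have hpq' : plow ≤ qbar := (hplow_le 0).trans ((hpq 0).trans (hq_le 0))
  haveI : Fact (plow ≤ qbar) := ⟨hpq'⟩
  set S : Fin (n + 1) → ℝ := fun i => ∑ j, a i j with hSdef
  have hSpos : ∀ i, 0 < S i := by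
    intro i
    obtain ⟨j, hj⟩ := hN i
    exact Finset.sum_pos' (fun k _ => ha i k) ⟨j, Finset.mem_univ j, hj⟩
  have hsat_mem : ∀ j z, plow ≤ sat (p j) (q j) z ∧ sat (p j) (q j) z ≤ qbar := by
    intro j z
    constructor
    · exact (hplow_le j).trans (le_max_left _ _)
    · exact (max_le (hpq j) (min_le_right _ _)).trans (hq_le j)
  have hsat_mono : ∀ j, Monotone (sat (p j) (q j)) := by
    intro j x y h
    exact max_le_max le_rfl (min_le_min h le_rfl)
  have hmem : ∀ (x : Fin (n + 1) → Set.Icc plow qbar) i,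
      (∑ j, a i j * sat (p j) (q j) (x j : ℝ)) / S i ∈ Set.Icc plow qbar := by
    intro x i
    constructor
    · rw [le_div_iff₀ (hSpos i)]
      calc plow * S i = ∑ j, a i j * plow := by simp [hSdef, Finset.mul_sum, mul_comm]
        _ ≤ ∑ j, a i j * sat (p j) (q j) (x j : ℝ) :=
          Finset.sum_le_sum fun j _ => mul_le_mul_of_nonneg_left (hsat_mem j _).1 (ha i j)
    · rw [div_le_iff₀ (hSpos i)]
      calc (∑ j, a i j * sat (p j) (q j) (x j : ℝ)) ≤ ∑ j, a i j * qbar :=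
          Finset.sum_le_sum fun j _ => mul_le_mul_of_nonneg_left (hsat_mem j _).2 (ha i j)
        _ = qbar * S i := by simp [hSdef, Finset.mul_sum, mul_comm]
  let T : (Fin (n + 1) → Set.Icc plow qbar) →o (Fin (n + 1) → Set.Icc plow qbar) :=
    { toFun := fun x i => ⟨(∑ j, a i j * sat (p j) (q j) (x j : ℝ)) / S i, hmem x i⟩
      monotone' := by
        intro x y hxy i
        rw [Subtype.mk_le_mk]
        have : (∑ j, a i j * sat (p j) (q j) (x j : ℝ))
            ≤ ∑ j, a i j * sat (p j) (q j) (y j : ℝ) :=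
          Finset.sum_le_sum fun j _ =>
            mul_le_mul_of_nonneg_left (hsat_mono j (hxy j)) (ha i j)
        exact div_le_div_of_nonneg_right this (hSpos i).le |>.trans_eq rfl }
  have hfix : T T.lfp = T.lfp := T.map_lfp
  set x := T.lfp with hx
  refine ⟨fun i => (x i : ℝ), fun i => (x i).2, fun i => ?_⟩
  have hfi : (∑ j, a i j * sat (p j) (q j) (x j : ℝ)) / S i = (x i : ℝ) := by
    have := congrFun hfix i
    exact congrArg Subtype.val this
  have hsum : ∑ j, a i j * sat (p j) (q j) (x j : ℝ) = (x i : ℝ) * S i := by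
    rw [div_eq_iff (hSpos i).ne'] at hfi
    linarith [hfi]
  calc ∑ j, a i j * (sat (p j) (q j) (x j : ℝ) - (x i : ℝ))
      = (∑ j, a i j * sat (p j) (q j) (x j : ℝ)) - ∑ j, a i j * (x i : ℝ) := by
        rw [← Finset.sum_sub_distrib]; congr 1; ext j; ring
    _ = (x i : ℝ) * S i - (x i : ℝ) * S i := by
        rw [hsum]; congr 1; rw [hSdef, Finset.mul_sum]; exact Finset.sum_congr rfl fun j _ => mul_comm _ _
    _ = 0 := by ring
end

section
/- Every equi-constrained equilibrium e of the interval consensus dynamics (e_m in the interior of ℝ∖[p_m,q_m] for all m) is locally asymptotically stable when N_i ≠ ∅ for all i: in a neighborhood of e, the dynamics reduces to d(x−e)/dt = −D(x−e) with D the positive diagonal degree matrix, which is exponentially stable. -/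
/-!
Outside `[p m, q m]` the saturation `sat (p m) (q m)` is locally constant, so on a small ball
around an equi-constrained equilibrium `e` the dynamics is exactly `ẋ = D (e - x)`, with `D` the
diagonal of the positive degrees `dᵢ = ∑ⱼ aᵢⱼ`. Its solution `eᵢ + (xᵢ(0) - eᵢ) e^{-dᵢ t}` never
leaves the ball and converges to `e`; since the full vector field is globally Lipschitz,
uniqueness of ODE solutions identifies every trajectory starting in the ball with it.
-/

open Finset Filter

open Topology

lemma sat_of_lt_left {p q z : ℝ} (h : z < p) : sat p q z = p :=
  max_eq_left ((min_le_left z q).trans h.le)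

lemma sat_of_le_right {p q z : ℝ} (h : q ≤ z) : sat p q z = max p q := by
  rw [sat, min_eq_right h]

lemma lipschitzWith_sat (p q : ℝ) : LipschitzWith 1 (sat p q) :=
  (LipschitzWith.id.min_const q).const_max p

lemma sat_eventually_eq {p q e : ℝ} (h : e < p ∨ q < e) :
    ∀ᶠ z in 𝓝 e, sat p q z = sat p q e := by
  rcases h with h | h
  · filter_upwards [eventually_lt_nhds h] with z hz
    rw [sat_of_lt_left hz, sat_of_lt_left h]
  · filter_upwards [eventually_gt_nhds h] with z hz
    rw [sat_of_le_right hz.le, sat_of_le_right h.le]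

section Consensus

variable {ι : Type*} [Fintype ι] (a : ι → ι → ℝ) (p q : ι → ℝ)

noncomputable def consensusField (x : ι → ℝ) : ι → ℝ :=
  fun i => ∑ j, a i j * (sat (p j) (q j) (x j) - x i)

def degree (i : ι) : ℝ := ∑ j, a i j

variable {a}

lemma degree_pos (ha : ∀ i j, 0 ≤ a i j) (hN : ∀ i, ∃ j, 0 < a i j) (i : ι) :
    0 < degree a i :=
  let ⟨j, hj⟩ := hN i
  sum_pos' (fun k _ => ha i k) ⟨j, mem_univ j, hj⟩

lemma abs_consensusField_sub_le (x y : ι → ℝ) (i : ι) :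
    |consensusField a p q x i - consensusField a p q y i| ≤ (∑ j, |a i j|) * (2 * dist x y) := by
  have hterm : ∀ j,
      |(sat (p j) (q j) (x j) - x i) - (sat (p j) (q j) (y j) - y i)| ≤ 2 * dist x y := by
    intro j
    have hsat : dist (sat (p j) (q j) (x j)) (sat (p j) (q j) (y j)) ≤ dist (x j) (y j) := by
      simpa using (lipschitzWith_sat (p j) (q j)).dist_le_mul (x j) (y j)
    have hj := dist_le_pi_dist x y j
    have hi := dist_le_pi_dist x y i
    simp only [Real.dist_eq] at hsat hj hi
    calc _ = |(sat (p j) (q j) (x j) - sat (p j) (q j) (y j)) - (x i - y i)| := by ring_nf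
      _ ≤ _ := abs_sub _ _
      _ ≤ 2 * dist x y := by linarith
  calc |consensusField a p q x i - consensusField a p q y i|
      = |∑ j, a i j * ((sat (p j) (q j) (x j) - x i) - (sat (p j) (q j) (y j) - y i))| := by
        rw [consensusField, consensusField, ← sum_sub_distrib]
        simp only [mul_sub]
    _ ≤ ∑ j, |a i j| * (2 * dist x y) := (abs_sum_le_sum_abs _ _).trans <|
        sum_le_sum fun j _ => by rw [abs_mul]; gcongr; exact hterm j
    _ = _ := (sum_mul ..).symm

lemma lipschitzWith_consensusField :
    LipschitzWith (2 * ∑ i, ∑ j, |a i j|).toNNReal (consensusField a p q) := by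
  refine LipschitzWith.of_dist_le' fun x y => (dist_pi_le_iff (by positivity)).2 fun i => ?_
  rw [Real.dist_eq]
  refine (abs_consensusField_sub_le p q x y i).trans ?_
  have hrow : ∑ j, |a i j| ≤ ∑ i, ∑ j, |a i j| :=
    single_le_sum (f := fun i => ∑ j, |a i j|) (fun _ _ => by positivity) (mem_univ i)
  calc (∑ j, |a i j|) * (2 * dist x y) ≤ (∑ i, ∑ j, |a i j|) * (2 * dist x y) := by gcongr
    _ = 2 * (∑ i, ∑ j, |a i j|) * dist x y := by ring

lemma consensusField_eq_of_sat_eq {e x : ι → ℝ} (he : consensusField a p q e = 0)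
    (hx : ∀ j, sat (p j) (q j) (x j) = sat (p j) (q j) (e j)) :
    consensusField a p q x = fun i => degree a i * (e i - x i) := by
  funext i
  have hei : ∑ j, a i j * (sat (p j) (q j) (e j) - e i) = 0 := congr_fun he i
  calc consensusField a p q x i
      = ∑ j, a i j * (sat (p j) (q j) (e j) - e i) + ∑ j, a i j * (e i - x i) := by
        rw [← sum_add_distrib]
        exact sum_congr rfl fun j _ => by rw [hx j]; ring
    _ = degree a i * (e i - x i) := by rw [hei, zero_add, ← sum_mul, degree]

lemma exists_consensusField_eq_on_closedBall {e : ι → ℝ} (he : consensusField a p q e = 0)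
    (hconstr : ∀ m, e m < p m ∨ q m < e m) :
    ∃ r > 0, ∀ x, dist x e ≤ r → consensusField a p q x = fun i => degree a i * (e i - x i) := by
  have hsat : ∀ᶠ x in 𝓝 e, ∀ j, sat (p j) (q j) (x j) = sat (p j) (q j) (e j) :=
    eventually_all.2 fun j => ((continuous_apply j).tendsto e).eventually
      (sat_eventually_eq (hconstr j))
  obtain ⟨r, hr, hball⟩ := Metric.nhds_basis_closedBall.eventually_iff.1 hsat
  exact ⟨r, hr, fun x hx => consensusField_eq_of_sat_eq p q he (hball hx)⟩

end Consensus

section DiagonalFlow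

variable {ι : Type*} (d e x₀ : ι → ℝ)

noncomputable def diagonalFlow (t : ℝ) : ι → ℝ :=
  fun i => e i + (x₀ i - e i) * Real.exp (-(d i * t))

lemma diagonalFlow_zero : diagonalFlow d e x₀ 0 = x₀ := by
  funext i
  simp [diagonalFlow]

lemma hasDerivAt_diagonalFlow [Fintype ι] (t : ℝ) :
    HasDerivAt (diagonalFlow d e x₀) (fun i => d i * (e i - diagonalFlow d e x₀ t i)) t := by
  refine hasDerivAt_pi.2 fun i => ?_
  have hlin : HasDerivAt (fun s => -(d i * s)) (-d i) t := by
    simpa using (hasDerivAt_id t).const_mul (-d i)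
  refine ((hlin.exp.const_mul (x₀ i - e i)).const_add (e i)).congr_deriv ?_
  unfold diagonalFlow
  ring

variable {d}

lemma dist_diagonalFlow_le [Fintype ι] (hd : ∀ i, 0 ≤ d i) {t : ℝ} (ht : 0 ≤ t) :
    dist (diagonalFlow d e x₀ t) e ≤ dist x₀ e := by
  refine (dist_pi_le_iff dist_nonneg).2 fun i => ?_
  have hexp : Real.exp (-(d i * t)) ≤ 1 := Real.exp_le_one_iff.2 (neg_nonpos.2 (mul_nonneg (hd i) ht))
  calc dist (diagonalFlow d e x₀ t i) (e i) = dist (x₀ i) (e i) * Real.exp (-(d i * t)) := by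
        simp [diagonalFlow, Real.dist_eq]
    _ ≤ dist (x₀ i) (e i) := mul_le_of_le_one_right dist_nonneg hexp
    _ ≤ dist x₀ e := dist_le_pi_dist x₀ e i

lemma tendsto_diagonalFlow (hd : ∀ i, 0 < d i) :
    Tendsto (diagonalFlow d e x₀) atTop (𝓝 e) := by
  refine tendsto_pi_nhds.2 fun i => ?_
  have hexp : Tendsto (fun t => Real.exp (-(d i * t))) atTop (𝓝 0) :=
    Real.tendsto_exp_neg_atTop_nhds_zero.comp (tendsto_id.const_mul_atTop (hd i))
  simpa [diagonalFlow] using (hexp.const_mul (x₀ i - e i)).const_add (e i)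

lemma eq_diagonalFlow_of_hasDerivAt [Fintype ι] {v : (ι → ℝ) → ι → ℝ} {K : NNReal}
    (hv : LipschitzWith K v) (hd : ∀ i, 0 ≤ d i) {r : ℝ}
    (hvr : ∀ y, dist y e ≤ r → v y = fun i => d i * (e i - y i))
    {x : ℝ → ι → ℝ} (hx : ∀ t, HasDerivAt x (v (x t)) t) (hx₀ : dist (x 0) e ≤ r)
    {t : ℝ} (ht : 0 ≤ t) :
    x t = diagonalFlow d e (x 0) t := by
  have hflow : ∀ s ≥ 0, HasDerivAt (diagonalFlow d e (x 0)) (v (diagonalFlow d e (x 0) s)) s :=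
    fun s hs => by
      rw [hvr _ ((dist_diagonalFlow_le e (x 0) hd hs).trans hx₀)]
      exact hasDerivAt_diagonalFlow d e (x 0) s
  refine ODE_solution_unique (v := fun _ => v) (fun _ => hv)
    (HasDerivAt.continuousOn fun s _ => hx s) (fun s _ => (hx s).hasDerivWithinAt)
    (HasDerivAt.continuousOn fun s hs => hflow s hs.1)
    (fun s hs => (hflow s hs.1).hasDerivWithinAt) (diagonalFlow_zero d e (x 0)).symm
    ⟨ht, le_rfl⟩

end DiagonalFlow

theorem equi_constrained_locally_asymptotically_stable_general
    (n : ℕ) (a : Fin (n + 1) → Fin (n + 1) → ℝ) (ha : ∀ i j, 0 ≤ a i j)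
    (hN : ∀ i, ∃ j, 0 < a i j)
    (p q : Fin (n + 1) → ℝ)
    (e : Fin (n + 1) → ℝ)
    (he : ∀ i, ∑ j, a i j * (sat (p j) (q j) (e j) - e i) = 0)
    (hconstr : ∀ m, e m < p m ∨ q m < e m) :
    (∀ δ > (0 : ℝ), ∃ ε > (0 : ℝ), ∀ x : ℝ → Fin (n + 1) → ℝ,
      (∀ i t, HasDerivAt (fun s => x s i)
        (∑ j, a i j * (sat (p j) (q j) (x t j) - x t i)) t) →
      dist (x 0) e ≤ ε → ∀ t ≥ (0 : ℝ), dist (x t) e ≤ δ) ∧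
    (∃ ε > (0 : ℝ), ∀ x : ℝ → Fin (n + 1) → ℝ,
      (∀ i t, HasDerivAt (fun s => x s i)
        (∑ j, a i j * (sat (p j) (q j) (x t j) - x t i)) t) →
      dist (x 0) e ≤ ε → Tendsto (fun t => x t) atTop (nhds e)) := by
  have hd : ∀ i, 0 < degree a i := degree_pos ha hN
  obtain ⟨r, hr, hlin⟩ := exists_consensusField_eq_on_closedBall p q (funext he) hconstr
  have hsol : ∀ x : ℝ → Fin (n + 1) → ℝ,
      (∀ i t, HasDerivAt (fun s => x s i) (∑ j, a i j * (sat (p j) (q j) (x t j) - x t i)) t) →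
      dist (x 0) e ≤ r → ∀ t ≥ 0, x t = diagonalFlow (degree a) e (x 0) t :=
    fun x hx hx₀ t ht => eq_diagonalFlow_of_hasDerivAt e (lipschitzWith_consensusField p q)
      (fun i => (hd i).le) hlin (fun t => hasDerivAt_pi.2 fun i => hx i t) hx₀ ht
  refine ⟨fun δ hδ => ⟨min δ r, lt_min hδ hr, fun x hx hx₀ t ht => ?_⟩,
    ⟨r, hr, fun x hx hx₀ => ?_⟩⟩
  · rw [hsol x hx (hx₀.trans (min_le_right δ r)) t ht]
    exact (dist_diagonalFlow_le e (x 0) (fun i => (hd i).le) ht).trans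
      (hx₀.trans (min_le_left δ r))
  · exact (tendsto_diagonalFlow e (x 0) hd).congr'
      (eventually_ge_atTop 0 |>.mono fun t ht => (hsol x hx hx₀ t ht).symm)

/-- Every equi-constrained equilibrium (each `e m` strictly outside `[p m, q m]`)
is locally asymptotically stable, provided every node has a neighbor. -/
theorem equi_constrained_locally_asymptotically_stable
    (n : ℕ) (a : Fin (n + 1) → Fin (n + 1) → ℝ) (ha : ∀ i j, 0 ≤ a i j)
    (hN : ∀ i, ∃ j, 0 < a i j)
    (p q : Fin (n + 1) → ℝ) (hpq : ∀ m, p m ≤ q m)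
    (e : Fin (n + 1) → ℝ)
    (he : ∀ i, ∑ j, a i j * (sat (p j) (q j) (e j) - e i) = 0)
    (hconstr : ∀ m, e m < p m ∨ q m < e m) :
    (∀ δ > (0 : ℝ), ∃ ε > (0 : ℝ), ∀ x : ℝ → Fin (n + 1) → ℝ,
      (∀ i t, HasDerivAt (fun s => x s i)
        (∑ j, a i j * (sat (p j) (q j) (x t j) - x t i)) t) →
      dist (x 0) e ≤ ε → ∀ t ≥ (0 : ℝ), dist (x t) e ≤ δ) ∧
    (∃ ε > (0 : ℝ), ∀ x : ℝ → Fin (n + 1) → ℝ,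
      (∀ i t, HasDerivAt (fun s => x s i)
        (∑ j, a i j * (sat (p j) (q j) (x t j) - x t i)) t) →
      dist (x 0) e ≤ ε → Tendsto (fun t => x t) atTop (nhds e)) :=
  equi_constrained_locally_asymptotically_stable_general n a ha hN p q e he hconstr
end

section
/- Every equi-unconstrained equilibrium of the interval consensus dynamics is locally stable: in a sufficiently small ball around it the dynamics coincide with the linear Laplacian consensus flow dx/dt = −Lx, and the ball can be chosen invariant. -/
open Finset Filter

lemma sat_fixed {p q e : ℝ} (hp : p < e) (hq : e < q) : sat p q e = e := by
  unfold sat; rw [min_eq_left hq.le, max_eq_right hp.le]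

lemma sat_lip {p q e z : ℝ} (hp : p < e) (hq : e < q) :
    |sat p q z - e| ≤ |z - e| := by
  have h := sat_fixed hp hq
  calc |sat p q z - e| = |max p (min z q) - max p (min e q)| := by
        unfold sat at h ⊢; rw [h]
    _ ≤ max |p - p| |min z q - min e q| := abs_max_sub_max_le_max _ _ _ _
    _ ≤ |z - e| := by
        rw [sub_self, abs_zero]
        refine max_le (abs_nonneg _) ?_
        calc |min z q - min e q| ≤ max |z - e| |q - q| := abs_min_sub_min_le_max _ _ _ _
          _ ≤ |z - e| := by rw [sub_self, abs_zero]; exact max_le le_rfl (abs_nonneg _)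

/-- Right slope of `|y|` is eventually below any `r > 0` when the signed
derivative is nonpositive. -/
lemma slope_abs_lt {y : ℝ → ℝ} {s v r : ℝ} (hy : HasDerivAt y v s)
    (hv : y s * v ≤ 0) (h0 : y s = 0 → v = 0) (hr : 0 < r) :
    ∀ᶠ z in nhdsWithin s (Set.Ioi s), (z - s)⁻¹ * (|y z| - |y s|) < r := by
  have hmono : nhdsWithin s (Set.Ioi s) ≤ nhdsWithin s {s}ᶜ :=
    nhdsWithin_mono _ (fun z hz => ne_of_gt hz)
  have hslope : Tendsto (fun z => (z - s)⁻¹ * (y z - y s))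
      (nhdsWithin s (Set.Ioi s)) (nhds v) := by
    have h := (hasDerivAt_iff_tendsto_slope.1 hy).mono_left hmono
    refine h.congr (fun z => ?_)
    simp [slope_def_field, div_eq_inv_mul]
  rcases lt_trichotomy (y s) 0 with hneg | hzero | hpos
  · have hv' : 0 ≤ v := by nlinarith
    have hev : ∀ᶠ z in nhdsWithin s (Set.Ioi s), y z < 0 :=
      eventually_nhdsWithin_of_eventually_nhds
        (hy.continuousAt.eventually (eventually_lt_nhds hneg))
    have hlt : ∀ᶠ z in nhdsWithin s (Set.Ioi s),
        -((z - s)⁻¹ * (y z - y s)) < r :=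
      (hslope.neg).eventually (eventually_lt_nhds (by linarith))
    filter_upwards [hev, hlt] with z hz1 hz2
    have : |y z| - |y s| = -(y z - y s) := by
      rw [abs_of_neg hz1, abs_of_neg hneg]; ring
    rw [this, mul_neg]; exact hz2
  · have hv0 : v = 0 := h0 hzero
    have habs : Tendsto (fun z => |(z - s)⁻¹ * (y z - y s)|)
        (nhdsWithin s (Set.Ioi s)) (nhds 0) := by
      have := hslope.abs; rwa [hv0, abs_zero] at this
    have hlt := habs.eventually (eventually_lt_nhds hr)
    filter_upwards [hlt, self_mem_nhdsWithin] with z hz1 hz2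
    have hzs : (0:ℝ) < z - s := sub_pos.2 hz2
    have : (z - s)⁻¹ * (|y z| - |y s|) = |(z - s)⁻¹ * (y z - y s)| := by
      rw [hzero]
      simp only [abs_zero, sub_zero]
      rw [abs_mul, abs_of_pos (inv_pos.2 hzs)]
    rw [this]; exact hz1
  · have hv' : v ≤ 0 := by nlinarith
    have hev : ∀ᶠ z in nhdsWithin s (Set.Ioi s), 0 < y z :=
      eventually_nhdsWithin_of_eventually_nhds
        (hy.continuousAt.eventually (eventually_gt_nhds hpos))
    have hlt : ∀ᶠ z in nhdsWithin s (Set.Ioi s),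
        (z - s)⁻¹ * (y z - y s) < r :=
      hslope.eventually (eventually_lt_nhds (by linarith))
    filter_upwards [hev, hlt] with z hz1 hz2
    have : |y z| - |y s| = y z - y s := by
      rw [abs_of_pos hz1, abs_of_pos hpos]
    rw [this]; exact hz2

/-- Every equi-unconstrained equilibrium (each `e m` in the open interval
`(p m, q m)`) is locally stable. -/
theorem equi_unconstrained_locally_stable
    (n : ℕ) (a : Fin (n + 1) → Fin (n + 1) → ℝ) (ha : ∀ i j, 0 ≤ a i j)
    (p q : Fin (n + 1) → ℝ) (hpq : ∀ m, p m ≤ q m)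
    (e : Fin (n + 1) → ℝ)
    (he : ∀ i, ∑ j, a i j * (sat (p j) (q j) (e j) - e i) = 0)
    (hunconstr : ∀ m, e m ∈ Set.Ioo (p m) (q m)) :
    ∀ δ > (0 : ℝ), ∃ ε > (0 : ℝ), ∀ x : ℝ → Fin (n + 1) → ℝ,
      (∀ i t, HasDerivAt (fun s => x s i)
        (∑ j, a i j * (sat (p j) (q j) (x t j) - x t i)) t) →
      dist (x 0) e ≤ ε → ∀ t ≥ (0 : ℝ), dist (x t) e ≤ δ := by
  intro δ hδ
  refine ⟨δ, hδ, ?_⟩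
  intro x hx h0 t ht
  have hcont : ∀ i, Continuous fun s => x s i := fun i =>
    continuous_iff_continuousAt.2 fun s => (hx i s).continuousAt
  have hcx : Continuous x := continuous_pi hcont
  set f : ℝ → ℝ := fun s => dist (x s) e with hfdef
  have hfc : Continuous f := hcx.dist continuous_const
  have hargmax : ∀ s, ∃ j, f s = |x s j - e j| := by
    intro s
    obtain ⟨j, -, hj⟩ := Finset.exists_mem_eq_sup Finset.univ Finset.univ_nonempty
      (fun i => nndist (x s i) (e i))
    refine ⟨j, ?_⟩
    show dist (x s) e = _
    rw [dist_pi_def, hj, coe_nndist, Real.dist_eq]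
  have hle : ∀ s j, |x s j - e j| ≤ f s := fun s j => by
    simpa [Real.dist_eq] using dist_le_pi_dist (x s) e j
  have hsat_e : ∀ m, sat (p m) (q m) (e m) = e m :=
    fun m => sat_fixed (hunconstr m).1 (hunconstr m).2
  have heq : ∀ i, ∑ j, a i j * (e j - e i) = 0 := by
    intro i
    have h := he i
    simpa [hsat_e] using h
  have key : ∀ s, ∀ r, 0 < r → ∀ᶠ z in nhdsWithin s (Set.Ioi s),
      (z - s)⁻¹ * (f z - f s) < r := by
    intro s r hr
    obtain ⟨j0, hj0⟩ := hargmax s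
    have hslope : ∀ᶠ z in nhdsWithin s (Set.Ioi s), ∀ j, |x s j - e j| = f s →
        (z - s)⁻¹ * (|x z j - e j| - |x s j - e j|) < r := by
      rw [Filter.eventually_all]
      intro j
      by_cases hjA : |x s j - e j| = f s
      · set v := ∑ m, a j m * (sat (p m) (q m) (x s m) - x s j) with hvdef
        have hd : HasDerivAt (fun z => x z j - e j) v s := (hx j s).sub_const _
        have hv2 : v = ∑ m, a j m *
            ((sat (p m) (q m) (x s m) - e m) - (x s j - e j)) := by
          have hsplit : ∀ m ∈ Finset.univ, a j m * (sat (p m) (q m) (x s m) - x s j)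
              = a j m * ((sat (p m) (q m) (x s m) - e m) - (x s j - e j))
                + a j m * (e m - e j) := fun m _ => by ring
          rw [hvdef, Finset.sum_congr rfl hsplit, Finset.sum_add_distrib, heq j,
            add_zero]
        have hsm : ∀ m, |sat (p m) (q m) (x s m) - e m| ≤ f s := fun m =>
          le_trans (sat_lip (hunconstr m).1 (hunconstr m).2) (hle s m)
        have hyv : (x s j - e j) * v ≤ 0 := by
          rw [hv2, Finset.mul_sum]
          apply Finset.sum_nonpos
          intro m _
          have h1 : (x s j - e j) * (sat (p m) (q m) (x s m) - e m)
              ≤ f s * f s := by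
            calc (x s j - e j) * (sat (p m) (q m) (x s m) - e m)
                ≤ |(x s j - e j) * (sat (p m) (q m) (x s m) - e m)| := le_abs_self _
              _ = |x s j - e j| * |sat (p m) (q m) (x s m) - e m| := abs_mul _ _
              _ ≤ f s * f s := by
                  have := hsm m
                  have h2 := abs_nonneg (x s j - e j)
                  rw [hjA]
                  exact mul_le_mul_of_nonneg_left this (by rw [← hjA]; exact h2)
          have h2 : (x s j - e j) * (x s j - e j) = f s * f s := by
            rw [← hjA, ← abs_mul_abs_self]
          nlinarith [ha j m]
        have h00 : x s j - e j = 0 → v = 0 := by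
          intro hy0
          have hfs0 : f s = 0 := by rw [← hjA, hy0, abs_zero]
          have hxm : ∀ m, x s m = e m := by
            intro m
            have h1 := hle s m
            rw [hfs0] at h1
            have := abs_nonneg (x s m - e m)
            have h2 : |x s m - e m| = 0 := le_antisymm h1 this
            have := abs_eq_zero.1 h2
            linarith [sub_eq_zero.1 this, this]
          have hxj : x s j = e j := hxm j
          calc v = ∑ m, a j m * (e m - e j) := by
                rw [hvdef]
                exact Finset.sum_congr rfl fun m _ => by rw [hxm m, hsat_e m, hxj]
            _ = 0 := heq j
        have := slope_abs_lt hd hyv h00 hr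
        filter_upwards [this] with z hz _
        exact hz
      · filter_upwards with z hz
        exact absurd hz hjA
    have hdom : ∀ᶠ z in nhdsWithin s (Set.Ioi s), ∀ i, |x s i - e i| < f s →
        |x z i - e i| < |x z j0 - e j0| := by
      rw [Filter.eventually_all]
      intro i
      by_cases hi : |x s i - e i| < f s
      · have hc : Continuous fun z => |x z j0 - e j0| - |x z i - e i| :=
          (((hcont j0).sub continuous_const).abs).sub
            (((hcont i).sub continuous_const).abs)
        have hpos : 0 < |x s j0 - e j0| - |x s i - e i| := by
          rw [← hj0]; linarith
        have hev := eventually_nhdsWithin_of_eventually_nhds (s := Set.Ioi s)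
          (hc.continuousAt.eventually (eventually_gt_nhds hpos))
        filter_upwards [hev] with z hz _
        linarith
      · filter_upwards with z hz
        exact absurd hz hi
    filter_upwards [hslope, hdom] with z hz1 hz2
    obtain ⟨j, hjz⟩ := hargmax z
    have hjA : |x s j - e j| = f s := by
      by_contra h
      have hltj : |x s j - e j| < f s := lt_of_le_of_ne (hle s j) h
      have h1 := hz2 j hltj
      have h2 := hle z j0
      rw [hjz] at h2
      linarith
    rw [hjz, ← hjA]
    exact hz1 j hjA
  have hg := le_gronwallBound_of_liminf_deriv_right_le (f := f)
      (f' := fun _ => (0 : ℝ)) (δ := δ) (K := 0) (ε := 0) (a := 0) (b := t)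
      hfc.continuousOn
      (fun s _ r hr => (key s r hr).frequently)
      h0 (fun s _ => by simp)
  have hft := hg t ⟨ht, le_rfl⟩
  simpa [gronwallBound] using hft
end

section
/- Under the ordering p_1 < q_1 < p_2 < q_2 < … < p_n < q_n (pairwise disjoint intervals) and strong connectivity, for any initial condition there exists a finite time T after which ψ_n(x_n(t)) = p_n and ψ_1(x_1(t)) = q_1 for all t ≥ T. -/
/-!
Every input of node `n` other than its own is at most `q_{n-1} < p_n`, and at least one of them
has positive weight, so the velocity of `x_n` is bounded by an antitone function of `x_n` that is
negative at `p_n` (the self-loop term `a_{nn} (ψ_n(x_n) - x_n)` is antitone and vanishes there).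
Hence `x_n` is pushed down at a uniform rate whenever it is close to or above `p_n`, and eventually
stays below `p_n`. Node `1` is the mirror image under `(x, p, q) ↦ (-x, -q, -p)`.
-/

open Finset Filter

theorem sat_neg (p q z : ℝ) (hpq : p ≤ q) : sat (-q) (-p) (-z) = -sat p q z := by
  simp only [sat, max_def, min_def]
  split_ifs <;> linarith

theorem sat_le (p q z : ℝ) (hpq : p ≤ q) : sat p q z ≤ q :=
  max_le hpq (min_le_right _ _)

theorem sat_of_le (p q z : ℝ) (hz : z ≤ p) : sat p q z = p :=
  max_eq_left ((min_le_left _ _).trans hz)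

theorem sat_of_ge (p q z : ℝ) (hpq : p ≤ q) (hz : q ≤ z) : sat p q z = q := by
  rw [sat, min_eq_right hz, max_eq_right hpq]

@[fun_prop]
theorem continuous_sat (p q : ℝ) : Continuous (sat p q) :=
  continuous_const.max (continuous_id.min continuous_const)

theorem antitone_sat_sub (p q : ℝ) : Antitone fun z => sat p q z - z := by
  intro z w hzw
  simp only [sat, max_def, min_def]
  split_ifs <;> linarith

theorem exists_ne_rel_of_reflTransGen {α : Type*} {r : α → α → Prop} {i j : α}
    (h : Relation.ReflTransGen r i j) (hij : i ≠ j) : ∃ k ≠ j, r k j := by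
  induction h with
  | refl => exact absurd rfl hij
  | @tail b c _ hbc ih =>
    obtain rfl | hb := eq_or_ne b c
    · exact ih hij
    · exact ⟨b, hb, hbc⟩

theorem eventually_le_of_hasDerivAt_le_neg {f f' : ℝ → ℝ} (hf : ∀ t, HasDerivAt f (f' t) t)
    {c δ : ℝ} (hδ : 0 < δ) (hf' : ∀ t, c ≤ f t → f' t ≤ -δ) :
    ∀ᶠ t in atTop, f t ≤ c := by
  obtain ⟨s, hs⟩ : ∃ s, f s ≤ c := by
    by_contra! hfc
    have hdecay := image_sub_le_mul_sub_of_deriv_le (fun t => (hf t).differentiableAt)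
      (fun t => (hf t).deriv ▸ hf' t (hfc t).le) (div_nonneg (sub_pos.2 (hfc 0)).le hδ.le)
    rw [sub_zero, neg_mul, mul_div_cancel₀ _ hδ.ne'] at hdecay
    linarith [hfc ((f 0 - c) / δ)]
  refine eventually_atTop.2 ⟨s, fun t hst => ?_⟩
  refine image_le_of_deriv_right_lt_deriv_boundary (B := fun _ => c) (B' := fun _ => 0)
    (fun u _ => (hf u).continuousAt.continuousWithinAt) (fun u _ => (hf u).hasDerivWithinAt)
    hs (fun _ => hasDerivAt_const _ _) (fun u _ hu => ?_) ⟨hst, le_rfl⟩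
  linarith [hf' u hu.ge]

theorem eventually_lt_of_hasDerivAt_le_of_antitone {f f' g : ℝ → ℝ}
    (hf : ∀ t, HasDerivAt f (f' t) t) (hfg : ∀ t, f' t ≤ g (f t)) (hg : Antitone g)
    {P : ℝ} (hgP : ContinuousAt g P) (hP : g P < 0) :
    ∀ᶠ t in atTop, f t < P := by
  obtain ⟨c, hcP, hc⟩ := (hgP.eventually (gt_mem_nhds hP)).exists_lt
  filter_upwards [eventually_le_of_hasDerivAt_le_neg hf (neg_pos.2 hc)
    (fun t ht => by simpa using (hfg t).trans (hg ht))] with t ht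
  exact ht.trans_lt hcP

section Network

variable {ι : Type*} [Fintype ι] [DecidableEq ι]

theorem eventually_lt_of_inputs_lt {i k : ι} {a : ι → ι → ℝ} (ha : ∀ j, 0 ≤ a i j)
    (hki : k ≠ i) (hk : 0 < a i k) {p q : ι → ℝ} (hpq : ∀ j, p j ≤ q j)
    (hq : ∀ j ≠ i, q j < p i) {x : ℝ → ι → ℝ}
    (hx : ∀ t, HasDerivAt (fun s => x s i) (∑ j, a i j * (sat (p j) (q j) (x t j) - x t i)) t) :
    ∀ᶠ t in atTop, x t i < p i := by
  -- the outputs of the other nodes are replaced by their upper bounds `q j`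
  set g : ℝ → ℝ := fun z =>
    a i i * (sat (p i) (q i) z - z) + ∑ j ∈ univ.erase i, a i j * (q j - z)
  refine eventually_lt_of_hasDerivAt_le_of_antitone hx (g := g) (fun t => ?_) ?_ ?_ ?_
  · rw [← add_sum_erase _ _ (mem_univ i)]
    simp only [g]
    gcongr with j hj
    · exact ha j
    · exact sat_le _ _ _ (hpq j)
  · intro z w hzw
    simp only [g]
    gcongr ?_ + ∑ j ∈ _, _ * ?_ with j hj
    · exact mul_le_mul_of_nonneg_left (antitone_sat_sub _ _ hzw) (ha i)
    · exact ha j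
    · linarith
  · exact (show Continuous g by fun_prop).continuousAt
  · simp only [g, sat_of_le _ _ _ le_rfl, sub_self, mul_zero, zero_add]
    exact sum_neg' (fun j hj => mul_nonpos_of_nonneg_of_nonpos (ha j)
      (sub_nonpos.2 (hq j (ne_of_mem_erase hj)).le))
      ⟨k, mem_erase.2 ⟨hki, mem_univ k⟩, mul_neg_of_pos_of_neg hk (sub_neg.2 (hq k hki))⟩

theorem eventually_gt_of_inputs_gt {i k : ι} {a : ι → ι → ℝ} (ha : ∀ j, 0 ≤ a i j)
    (hki : k ≠ i) (hk : 0 < a i k) {p q : ι → ℝ} (hpq : ∀ j, p j ≤ q j)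
    (hp : ∀ j ≠ i, q i < p j) {x : ℝ → ι → ℝ}
    (hx : ∀ t, HasDerivAt (fun s => x s i) (∑ j, a i j * (sat (p j) (q j) (x t j) - x t i)) t) :
    ∀ᶠ t in atTop, q i < x t i := by
  have hx' (t : ℝ) : HasDerivAt (fun s => -x s i)
      (∑ j, a i j * (sat (-q j) (-p j) (-x t j) - -x t i)) t := by
    refine (hx t).neg.congr_deriv ?_
    rw [← sum_neg_distrib]
    refine sum_congr rfl fun j _ => ?_
    rw [sat_neg _ _ _ (hpq j)]
    ring
  filter_upwards [eventually_lt_of_inputs_lt (x := -x) ha hki hk (fun j => neg_le_neg (hpq j))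
    (fun j hj => neg_lt_neg (hp j hj)) hx'] with t ht
  exact neg_lt_neg_iff.1 ht

end Network

theorem extreme_nodes_eventually_saturated_general
    (n : ℕ) (hn : 1 ≤ n)
    (a : Fin (n + 1) → Fin (n + 1) → ℝ) (ha : ∀ i j, 0 ≤ a i j)
    (hSC : ∀ i j : Fin (n + 1), Relation.ReflTransGen (fun u v => 0 < a v u) i j)
    (p q : Fin (n + 1) → ℝ) (hpq : ∀ m, p m ≤ q m)
    (hdisj : ∀ i j : Fin (n + 1), i < j → q i < p j)
    (x : ℝ → Fin (n + 1) → ℝ)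
    (hx : ∀ i t, HasDerivAt (fun s => x s i)
      (∑ j, a i j * (sat (p j) (q j) (x t j) - x t i)) t) :
    ∃ T : ℝ, ∀ t ≥ T,
      sat (p (Fin.last n)) (q (Fin.last n)) (x t (Fin.last n)) = p (Fin.last n) ∧
      sat (p 0) (q 0) (x t 0) = q 0 := by
  have h0L : (0 : Fin (n + 1)) ≠ Fin.last n := by
    rw [Ne, Fin.ext_iff, Fin.val_zero, Fin.val_last]
    omega
  obtain ⟨k, hkL, hk⟩ := exists_ne_rel_of_reflTransGen (hSC 0 (Fin.last n)) h0L
  obtain ⟨k', hk'0, hk'⟩ := exists_ne_rel_of_reflTransGen (hSC (Fin.last n) 0) h0L.symm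
  have hlast := eventually_lt_of_inputs_lt (ha _) hkL hk hpq
    (fun j hj => hdisj j _ (Fin.lt_last_iff_ne_last.2 hj)) (hx _)
  have hzero := eventually_gt_of_inputs_gt (ha _) hk'0 hk' hpq
    (fun j hj => hdisj 0 j (Fin.pos_iff_ne_zero.2 hj)) (hx _)
  obtain ⟨T, hT⟩ := eventually_atTop.1 (hlast.and hzero)
  exact ⟨T, fun t ht =>
    ⟨sat_of_le _ _ _ (hT t ht).1.le, sat_of_ge _ _ _ (hpq 0) (hT t ht).2.le⟩⟩

/-- With strongly connected graph and pairwise disjoint ordered intervals,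
for any solution there is a finite time after which the output of node `n`
is saturated at `p_n` and the output of node `1` is saturated at `q_1`. -/
theorem extreme_nodes_eventually_saturated
    (n : ℕ) (hn : 1 ≤ n)
    (a : Fin (n + 1) → Fin (n + 1) → ℝ) (ha : ∀ i j, 0 ≤ a i j)
    (hSC : ∀ i j : Fin (n + 1), Relation.ReflTransGen (fun u v => 0 < a v u) i j)
    (p q : Fin (n + 1) → ℝ) (hpq : ∀ m, p m ≤ q m)
    (hpmono : StrictMono p) (hqmono : StrictMono q)
    (hdisj : ∀ i j : Fin (n + 1), i < j → q i < p j)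
    (x : ℝ → Fin (n + 1) → ℝ)
    (hx : ∀ i t, HasDerivAt (fun s => x s i)
      (∑ j, a i j * (sat (p j) (q j) (x t j) - x t i)) t) :
    ∃ T : ℝ, ∀ t ≥ T,
      sat (p (Fin.last n)) (q (Fin.last n)) (x t (Fin.last n)) = p (Fin.last n) ∧
      sat (p 0) (q 0) (x t 0) = q 0 :=
  extreme_nodes_eventually_saturated_general n hn a ha hSC p q hpq hdisj x hx
end

section
/- Consider the directed cycle graph where node i is influenced only by node i+1 (and node n by node 1), with pairwise disjoint intervals ordered as q_1 < p_n (empty intersection) and p_1 < p_2 < … < p_n, q_1 < … < q_n. Then the dynamics admits a unique equilibrium e given by: e_n = q_1, e_{n−1} = p_n, and for i = 2,…,n−1, e_{n−i} = q_{n−i+1} if p_n > q_{n−i+1} and e_{n−i} = p_n otherwise. -/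
open Finset Filter

set_option maxHeartbeats 2000000 in
/-- On the directed cycle graph (node `i` influenced only by node `i+1`,
cyclically) with pairwise disjoint ordered intervals, the dynamics admits a
unique equilibrium, given explicitly by `e_n = q_1`, and
`e_k = min(q_{k+1}, p_n)` for `k < n` (which yields `e_{n-1} = p_n`). -/
theorem cycle_unique_equilibrium
    (n : ℕ) (hn : 1 ≤ n)
    (a : Fin (n + 1) → ℝ) (ha : ∀ i, 0 < a i)
    (p q : Fin (n + 1) → ℝ) (hpq : ∀ m, p m ≤ q m)
    (hpmono : StrictMono p) (hqmono : StrictMono q)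
    (hdisj : ∀ i j : Fin (n + 1), i < j → q i < p j) :
    ∀ e : Fin (n + 1) → ℝ,
      (∀ i, a i * (sat (p (i + 1)) (q (i + 1)) (e (i + 1)) - e i) = 0) ↔
      (∀ k : Fin (n + 1),
        e k = if k = Fin.last n then q 0 else min (q (k + 1)) (p (Fin.last n))) := by
  intro e
  have hlast0 : (0 : Fin (n + 1)) < Fin.last n := by
    rw [Fin.lt_def]; simp [Fin.last]; omega
  have hq0p : q 0 < p (Fin.last n) := hdisj _ _ hlast0
  have hadd : ∀ (m : ℕ) (hm : m < n),
      (⟨m, by omega⟩ : Fin (n + 1)) + 1 = ⟨m + 1, by omega⟩ := by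
    intro m hm
    rw [Fin.add_def]
    congr 1
    simp [Fin.val_one]
    omega
  constructor
  · intro h
    have heq : ∀ i, e i = sat (p (i + 1)) (q (i + 1)) (e (i + 1)) := by
      intro i
      have h2 := h i
      rcases mul_eq_zero.mp h2 with h4 | h4
      · exact absurd h4 (ha i).ne'
      · linarith [sub_eq_zero.mp h4]
    have hle : e (Fin.last n) ≤ q 0 := by
      have h0 := heq (Fin.last n)
      rw [Fin.last_add_one] at h0
      rw [h0]
      unfold sat
      have := hpq 0
      simp only [max_def, min_def]
      split_ifs <;> linarith
    have key : ∀ (d m : ℕ) (hm : m < n), n - 1 - m ≤ d →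
        e ⟨m, by omega⟩ = min (q ⟨m + 1, by omega⟩) (p (Fin.last n)) := by
      intro d
      induction d with
      | zero =>
        intro m hm hd
        have hmn : m = n - 1 := by omega
        subst hmn
        have hk1 : (⟨n - 1, by omega⟩ : Fin (n + 1)) + 1 = Fin.last n := by
          rw [hadd _ (by omega)]
          simp [Fin.last]
          omega
        have h0 := heq ⟨n - 1, by omega⟩
        rw [hk1] at h0
        have hlq : (⟨n - 1 + 1, by omega⟩ : Fin (n + 1)) = Fin.last n := by
          simp [Fin.last]; omega
        rw [h0, hlq]
        unfold sat
        have h1 := hpq (Fin.last n)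
        simp only [max_def, min_def]
        split_ifs <;> linarith
      | succ d ih =>
        intro m hm hd
        by_cases hmn : n - 1 - m ≤ d
        · exact ih m hm hmn
        · have hm1 : m + 1 < n := by omega
          have h0 := heq ⟨m, by omega⟩
          rw [hadd m hm] at h0
          have hIH := ih (m + 1) hm1 (by omega)
          rw [hIH] at h0
          rw [h0]
          have hAB : p ⟨m + 1, by omega⟩ ≤ q ⟨m + 1, by omega⟩ := hpq _
          have hBP : q (⟨m + 1, by omega⟩ : Fin (n + 1)) < p (Fin.last n) := by
            apply hdisj
            rw [Fin.lt_def]; simp [Fin.last]; omega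
          have hAC : p (⟨m + 1, by omega⟩ : Fin (n + 1)) < q ⟨m + 1 + 1, by omega⟩ := by
            have h1 : p (⟨m + 1, by omega⟩ : Fin (n + 1)) < p ⟨m + 1 + 1, by omega⟩ := by
              apply hpmono
              rw [Fin.lt_def]; simp
            linarith [hpq (⟨m + 1 + 1, by omega⟩ : Fin (n + 1))]
          have hBC : q (⟨m + 1, by omega⟩ : Fin (n + 1)) ≤ q ⟨m + 1 + 1, by omega⟩ := by
            apply le_of_lt
            apply hqmono
            rw [Fin.lt_def]; simp
          unfold sat
          simp only [max_def, min_def]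
          split_ifs <;> linarith
    intro k
    by_cases hk : k = Fin.last n
    · subst hk
      simp only [if_pos rfl]
      have h0 := heq (Fin.last n)
      rw [Fin.last_add_one] at h0
      have hz : (⟨0, by omega⟩ : Fin (n + 1)) = 0 := rfl
      have he0 := key (n - 1) 0 (by omega) (by omega)
      rw [hz] at he0
      have hq01 : q 0 < q ⟨0 + 1, by omega⟩ := by
        apply hqmono
        rw [Fin.lt_def]; simp
      rw [h0, he0]
      unfold sat
      have := hpq 0
      simp only [max_def, min_def]
      split_ifs <;> linarith
    · simp only [if_neg hk]
      have hkv : k.val < n := Fin.val_lt_last hk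
      have hk2 : k = ⟨k.val, by omega⟩ := rfl
      have := key (n - 1) k.val hkv (by omega)
      rw [← hadd k.val hkv] at this
      exact this
  · intro h i
    have hsat : sat (p (i + 1)) (q (i + 1)) (e (i + 1)) = e i := by
      by_cases hi : i = Fin.last n
      · subst hi
        rw [Fin.last_add_one, h 0, h (Fin.last n)]
        have h0l : (0 : Fin (n + 1)) ≠ Fin.last n := ne_of_lt hlast0
        simp only [if_neg h0l, if_pos rfl]
        have hq01 : q 0 < q (0 + 1) := by
          apply hqmono
          rw [Fin.lt_def]
          have : ((0 : Fin (n + 1)) + 1).val = 1 := by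
            rw [Fin.val_add_one]
            simp [ne_of_lt hlast0]
          rw [this]; simp
        unfold sat
        have := hpq 0
        simp only [max_def, min_def]
        split_ifs <;> linarith
      · have hiv : i.val < n := Fin.val_lt_last hi
        rw [h i, if_neg hi, h (i + 1)]
        have hi1v : (i + 1).val = i.val + 1 := by
          rw [Fin.val_add_one, if_neg hi]
        by_cases hi1 : i + 1 = Fin.last n
        · rw [if_pos hi1, hi1]
          unfold sat
          have h1 := hpq (Fin.last n)
          have h2 := hpq 0
          simp only [max_def, min_def]
          split_ifs <;> linarith
        · rw [if_neg hi1]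
          have hi2v : (i + 1 + 1).val = i.val + 2 := by
            rw [Fin.val_add_one, if_neg hi1, hi1v]
          have hAB : p (i + 1) ≤ q (i + 1) := hpq _
          have hi1vn : i.val + 1 < n := by
            have h5 := Fin.val_lt_last hi1
            rw [hi1v] at h5
            exact h5
          have hBP : q (i + 1) < p (Fin.last n) := by
            apply hdisj
            rw [Fin.lt_def, hi1v]
            simp [Fin.last]
            omega
          have hAC : p (i + 1) < q (i + 1 + 1) := by
            have h1 : p (i + 1) < p (i + 1 + 1) := by
              apply hpmono
              rw [Fin.lt_def, hi1v, hi2v]; omega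
            linarith [hpq (i + 1 + 1)]
          have hBC : q (i + 1) ≤ q (i + 1 + 1) := by
            apply le_of_lt
            apply hqmono
            rw [Fin.lt_def, hi1v, hi2v]; omega
          unfold sat
          simp only [max_def, min_def]
          split_ifs <;> linarith
    rw [hsat]
    ring
end

section
/- In the discrete-time interval consensus x_i(t+1) = (1 − ε d_i) x_i(t) + ε Σ_{j∈N_i} a_{ij} ψ_j(x_j(t)) with step size ε < 1/max_i d_i (d_i = Σ_{j∈N_i} a_{ij}) and nonempty interval intersection, the function H(x(t)) = max{max_i x_i(t), q_*} is nonincreasing in t and h(x(t)) = min{min_i x_i(t), p_*} is nondecreasing, where p_* = max_i p_i ≤ q_* = min_i q_i. -/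
open Finset Filter

/-- In discrete-time interval consensus with a small enough step size and
nonempty interval intersection, `H(x(t)) = max{max_i x_i(t), q_*}` is
nonincreasing and `h(x(t)) = min{min_i x_i(t), p_*}` is nondecreasing. -/
theorem discrete_H_h_monotone
    (n : ℕ) (a : Fin (n + 1) → Fin (n + 1) → ℝ) (ha : ∀ i j, 0 ≤ a i j)
    (p q : Fin (n + 1) → ℝ) (hpq : ∀ m, p m ≤ q m)
    (pstar qstar : ℝ)
    (hpstar : pstar = Finset.univ.sup' Finset.univ_nonempty p)
    (hqstar : qstar = Finset.univ.inf' Finset.univ_nonempty q)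
    (hinter : pstar ≤ qstar)
    (ε : ℝ) (hε : 0 < ε)
    (hstep : ε * (Finset.univ.sup' Finset.univ_nonempty fun i => ∑ j, a i j) < 1)
    (x : ℕ → Fin (n + 1) → ℝ)
    (hx : ∀ i t, x (t + 1) i =
      (1 - ε * ∑ j, a i j) * x t i + ε * ∑ j, a i j * sat (p j) (q j) (x t j)) :
    ∀ t : ℕ,
      max (Finset.univ.sup' Finset.univ_nonempty (x (t + 1))) qstar ≤
        max (Finset.univ.sup' Finset.univ_nonempty (x t)) qstar ∧
      min (Finset.univ.inf' Finset.univ_nonempty (x t)) pstar ≤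
        min (Finset.univ.inf' Finset.univ_nonempty (x (t + 1))) pstar := by
  intro t
  set H := max (Finset.univ.sup' Finset.univ_nonempty (x t)) qstar with hH
  set h := min (Finset.univ.inf' Finset.univ_nonempty (x t)) pstar with hh
  have hdi : ∀ i : Fin (n + 1), ε * ∑ j, a i j < 1 := fun i =>
    lt_of_le_of_lt
      (mul_le_mul_of_nonneg_left
        (Finset.le_sup' (f := fun i => ∑ j, a i j) (Finset.mem_univ i)) hε.le) hstep
  have hd0 : ∀ i : Fin (n + 1), (0:ℝ) ≤ ∑ j, a i j := fun i =>
    Finset.sum_nonneg fun j _ => ha i j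
  have hqH : qstar ≤ H := le_max_right _ _
  have hph : h ≤ pstar := min_le_right _ _
  have hub : ∀ i, x (t + 1) i ≤ H := by
    intro i
    rw [hx i t]
    have hsat : ∀ j : Fin (n + 1), sat (p j) (q j) (x t j) ≤ H := by
      intro j
      unfold sat
      apply max_le
      · exact le_trans (le_trans (hpstar ▸ Finset.le_sup' p (Finset.mem_univ j)) hinter) hqH
      · exact le_trans (min_le_left _ _)
          (le_trans (Finset.le_sup' (x t) (Finset.mem_univ j)) (le_max_left _ _))
    have step : (1 - ε * ∑ j, a i j) * x t i + ε * ∑ j, a i j * sat (p j) (q j) (x t j)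
        ≤ (1 - ε * ∑ j, a i j) * H + ε * ∑ j, a i j * H := by
      gcongr with j hj
      · linarith [hdi i]
      · exact le_trans (Finset.le_sup' (x t) (Finset.mem_univ i)) (le_max_left _ _)
      · exact ha i j
      · exact hsat j
    have : (1 - ε * ∑ j, a i j) * H + ε * ∑ j, a i j * H = H := by
      rw [← Finset.sum_mul]; ring
    linarith
  have hlb : ∀ i, h ≤ x (t + 1) i := by
    intro i
    rw [hx i t]
    have hsat : ∀ j : Fin (n + 1), h ≤ sat (p j) (q j) (x t j) := by
      intro j
      unfold sat
      refine le_trans ?_ (le_max_right _ _)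
      apply le_min
      · exact le_trans (min_le_left _ _) (Finset.inf'_le (x t) (Finset.mem_univ j))
      · exact le_trans hph (le_trans hinter (hqstar ▸ Finset.inf'_le q (Finset.mem_univ j)))
    have step : (1 - ε * ∑ j, a i j) * h + ε * ∑ j, a i j * h
        ≤ (1 - ε * ∑ j, a i j) * x t i + ε * ∑ j, a i j * sat (p j) (q j) (x t j) := by
      gcongr with j hj
      · linarith [hdi i]
      · exact le_trans (min_le_left _ _) (Finset.inf'_le (x t) (Finset.mem_univ i))
      · exact ha i j
      · exact hsat j
    have : (1 - ε * ∑ j, a i j) * h + ε * ∑ j, a i j * h = h := by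
      rw [← Finset.sum_mul]; ring
    linarith
  constructor
  · exact max_le (Finset.sup'_le _ _ fun i _ => hub i) hqH
  · exact le_min (Finset.le_inf' _ _ fun i _ => hlb i) hph
end
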